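/- arXiv:2008.01317 — 2 statements merged into one kernel-verified Lean document; each statement's English description precedes it below -/
import Mathlib

section
/- Let G₁ and G₂ be graphs on n₁ and n₂ vertices respectively, let 0 ≤ α ≤ 1 and β = 1−α. Then the characteristic polynomial of A_α(G₁ ∘ G₂) satisfies f_{A_α(G₁∘G₂)}(ν) = (f_{A_α(G₂)}(ν − α))^{n₁} · f_{A_α(G₁)}(ν − αn₂ − β²Γ_{A_α(G₂)}(ν − α)), for all ν such that (ν−α)I − A_α(G₂) is invertible. -/
open Matrix Polynomial

open scoped Classical in
/-- The real adjacency matrix of a simple graph. -/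
noncomputable def adjMat {V : Type*} (G : SimpleGraph V) : Matrix V V ℝ :=
  Matrix.of fun u v => if G.Adj u v then 1 else 0

open scoped Classical in
/-- The diagonal degree matrix of a simple graph. -/
noncomputable def degMatrix {V : Type*} (G : SimpleGraph V) : Matrix V V ℝ :=
  Matrix.of fun u v => if u = v then ((G.neighborSet u).ncard : ℝ) else 0

/-- `A_α(G) = α D(G) + (1-α) A(G)`. -/
noncomputable def Aalpha {V : Type*} (G : SimpleGraph V) (α : ℝ) : Matrix V V ℝ :=
  α • degMatrix G + (1 - α) • adjMat G

open scoped Classical in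
/-- The `M`-coronal `Γ_M(θ) = jᵀ (θ I - M)⁻¹ j`, the sum of the entries of `(θ I - M)⁻¹`. -/
noncomputable def coronal {n : Type*} [Fintype n] (M : Matrix n n ℝ) (θ : ℝ) : ℝ :=
  ∑ i, ∑ j, (θ • (1 : Matrix n n ℝ) - M)⁻¹ i j

open scoped Classical in
/-- The vertex-edge incidence matrix of a simple graph. -/
noncomputable def incMat {V : Type*} (G : SimpleGraph V) : Matrix V G.edgeSet ℝ :=
  Matrix.of fun u e => if u ∈ (e : Sym2 V) then 1 else 0

/-- The corona `G₁ ∘ G₂`: one copy of `G₁` and one copy of `G₂` for every vertex of `G₁`,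
joining vertex `i` of `G₁` to every vertex of the `i`-th copy of `G₂`. -/
def corona {V₁ V₂ : Type*} (G₁ : SimpleGraph V₁) (G₂ : SimpleGraph V₂) :
    SimpleGraph (V₁ ⊕ V₁ × V₂) where
  Adj x y :=
    match x, y with
    | Sum.inl u, Sum.inl v => G₁.Adj u v
    | Sum.inl u, Sum.inr p => u = p.1
    | Sum.inr p, Sum.inl u => u = p.1
    | Sum.inr p, Sum.inr q => p.1 = q.1 ∧ G₂.Adj p.2 q.2
  symm := by
    constructor
    rintro (u | p) (v | q) h
    · exact G₁.adj_symm h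
    · exact h
    · exact h
    · exact ⟨h.1.symm, G₂.adj_symm h.2⟩
  loopless := by
    constructor
    rintro (u | p) h
    · exact G₁.irrefl h
    · exact G₂.irrefl h.2

/-- The edge corona `G₁ ◊ G₂`: one copy of `G₁` and one copy of `G₂` for every edge of `G₁`,
joining both endpoints of edge `e` of `G₁` to every vertex of the copy of `G₂` indexed by `e`. -/
def edgeCorona {V₁ V₂ : Type*} (G₁ : SimpleGraph V₁) (G₂ : SimpleGraph V₂) :
    SimpleGraph (V₁ ⊕ (G₁.edgeSet × V₂)) where
  Adj x y :=
    match x, y with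
    | Sum.inl u, Sum.inl v => G₁.Adj u v
    | Sum.inl u, Sum.inr p => u ∈ (p.1 : Sym2 V₁)
    | Sum.inr p, Sum.inl u => u ∈ (p.1 : Sym2 V₁)
    | Sum.inr p, Sum.inr q => p.1 = q.1 ∧ G₂.Adj p.2 q.2
  symm := by
    constructor
    rintro (u | p) (v | q) h
    · exact G₁.adj_symm h
    · exact h
    · exact h
    · exact ⟨h.1.symm, G₂.adj_symm h.2⟩
  loopless := by
    constructor
    rintro (u | p) h
    · exact G₁.irrefl h
    · exact G₂.irrefl h.2

/-- The `R`-vertex corona `G₁ ⊙ G₂`: the `R`-graph of `G₁` (a new vertex per edge, joined to the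
endpoints of that edge) together with one copy of `G₂` for every vertex of `G₁`, joining vertex
`i` of `G₁` to every vertex of the `i`-th copy of `G₂`. -/
def RvertexCorona {V₁ V₂ : Type*} (G₁ : SimpleGraph V₁) (G₂ : SimpleGraph V₂) :
    SimpleGraph (V₁ ⊕ (G₁.edgeSet ⊕ V₁ × V₂)) where
  Adj x y :=
    match x, y with
    | Sum.inl u, Sum.inl v => G₁.Adj u v
    | Sum.inl u, Sum.inr (Sum.inl e) => u ∈ (e : Sym2 V₁)
    | Sum.inr (Sum.inl e), Sum.inl u => u ∈ (e : Sym2 V₁)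
    | Sum.inl u, Sum.inr (Sum.inr p) => u = p.1
    | Sum.inr (Sum.inr p), Sum.inl u => u = p.1
    | Sum.inr (Sum.inr p), Sum.inr (Sum.inr q) => p.1 = q.1 ∧ G₂.Adj p.2 q.2
    | _, _ => False
  symm := by
    constructor
    rintro (u | (e | p)) (v | (f | q)) h
    all_goals first
      | exact G₁.adj_symm h
      | exact h
      | exact ⟨h.1.symm, G₂.adj_symm h.2⟩
  loopless := by
    constructor
    rintro (u | (e | p)) h
    · exact G₁.irrefl h
    · exact h
    · exact G₂.irrefl h.2

/-- The `R`-edge corona `G₁ ⊖ G₂`: the `R`-graph of `G₁` (a new vertex per edge, joined to the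
endpoints of that edge) together with one copy of `G₂` for every edge of `G₁`, joining the new
vertex of edge `e` to every vertex of the copy of `G₂` indexed by `e`. -/
def RedgeCorona {V₁ V₂ : Type*} (G₁ : SimpleGraph V₁) (G₂ : SimpleGraph V₂) :
    SimpleGraph (V₁ ⊕ (G₁.edgeSet ⊕ G₁.edgeSet × V₂)) where
  Adj x y :=
    match x, y with
    | Sum.inl u, Sum.inl v => G₁.Adj u v
    | Sum.inl u, Sum.inr (Sum.inl e) => u ∈ (e : Sym2 V₁)
    | Sum.inr (Sum.inl e), Sum.inl u => u ∈ (e : Sym2 V₁)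
    | Sum.inr (Sum.inl e), Sum.inr (Sum.inr p) => e = p.1
    | Sum.inr (Sum.inr p), Sum.inr (Sum.inl e) => e = p.1
    | Sum.inr (Sum.inr p), Sum.inr (Sum.inr q) => p.1 = q.1 ∧ G₂.Adj p.2 q.2
    | _, _ => False
  symm := by
    constructor
    rintro (u | (e | p)) (v | (f | q)) h
    all_goals first
      | exact G₁.adj_symm h
      | exact h
      | exact h.symm
      | exact ⟨h.1.symm, G₂.adj_symm h.2⟩
  loopless := by
    constructor
    rintro (u | (e | p)) h
    · exact G₁.irrefl h
    · exact h
    · exact G₂.irrefl h.2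

/-! Listing the vertices of `G₁ ∘ G₂` as those of `G₁` followed by the `n₁` copies of `G₂`,
`νI - A_α(G₁ ∘ G₂)` is a block matrix with lower-right block `I ⊗ ((ν - α)I - A_α(G₂))`
(the `+1` in the degrees of the copies shifts `ν` to `ν - α`) and off-diagonal blocks
`-β (I ⊗ jᵀ)` and its transpose. The lower-right block has determinant `f_{A_α(G₂)}(ν - α)^{n₁}`,
and its Schur complement is `(ν - α n₂ - β² Γ)I - A_α(G₁)` with
`Γ = jᵀ((ν - α)I - A_α(G₂))⁻¹j`. -/

open scoped Kronecker

section

variable {m n K : Type*} [Fintype m] [Fintype n] [DecidableEq m] [Field K]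

theorem mul_one_kronecker_mul_eq_smul_one (c d : K) (P : Matrix n n K) :
    ((of fun i p => if i = p.1 then c else 0 : Matrix m (m × n) K) * ((1 : Matrix m m K) ⊗ₖ P) *
        (of fun p i => if i = p.1 then d else 0 : Matrix (m × n) m K)) =
      (c * d * ∑ a, ∑ b, P a b) • (1 : Matrix m m K) := by
  ext i j
  simp only [mul_apply, of_apply, kroneckerMap_apply, one_apply, ite_mul, one_mul, zero_mul,
    mul_ite, mul_zero, Fintype.sum_prod_type, Finset.sum_ite_irrel, Finset.sum_const_zero,
    Finset.sum_ite_eq', Finset.mem_univ, ↓reduceIte, Finset.sum_mul, Finset.sum_ite_eq,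
    Finset.mul_sum, Matrix.smul_apply, smul_eq_mul, mul_one]
  rw [Finset.sum_comm]
  simp_rw [mul_right_comm c]

theorem det_fromBlocks_one_kronecker [DecidableEq n] (A : Matrix m m K) (c d : K)
    (N : Matrix n n K) (hN : IsUnit N.det) :
    (fromBlocks A (of fun i p => if i = p.1 then c else 0)
        (of fun p i => if i = p.1 then d else 0) ((1 : Matrix m m K) ⊗ₖ N)).det =
      N.det ^ Fintype.card m * (A - (c * d * ∑ a, ∑ b, N⁻¹ a b) • (1 : Matrix m m K)).det := by
  have hD : IsUnit ((1 : Matrix m m K) ⊗ₖ N).det := by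
    simpa [det_kronecker] using hN.pow (Fintype.card m)
  let := invertibleOfIsUnitDet _ hD
  rw [det_fromBlocks₂₂, invOf_eq_nonsing_inv, inv_kronecker, inv_one,
    mul_one_kronecker_mul_eq_smul_one, det_kronecker, det_one, one_pow, one_mul]

end

-- `coronal` is stated with classical decidable equality; this moves it to any instance.
theorem coronal_eq_sum_inv {n : Type*} [Fintype n] [DecidableEq n] (M : Matrix n n ℝ) (θ : ℝ) :
    coronal M θ = ∑ i, ∑ j, (θ • (1 : Matrix n n ℝ) - M)⁻¹ i j := by
  unfold coronal
  congr!

section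

variable {V₁ V₂ : Type*} (G₁ : SimpleGraph V₁) (G₂ : SimpleGraph V₂)

@[simp]
theorem corona_adj_inl_inl (u v : V₁) :
    (corona G₁ G₂).Adj (Sum.inl u) (Sum.inl v) ↔ G₁.Adj u v := Iff.rfl

@[simp]
theorem corona_adj_inl_inr (u : V₁) (q : V₁ × V₂) :
    (corona G₁ G₂).Adj (Sum.inl u) (Sum.inr q) ↔ u = q.1 := Iff.rfl

@[simp]
theorem corona_adj_inr_inl (p : V₁ × V₂) (v : V₁) :
    (corona G₁ G₂).Adj (Sum.inr p) (Sum.inl v) ↔ v = p.1 := Iff.rfl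

@[simp]
theorem corona_adj_inr_inr (p q : V₁ × V₂) :
    (corona G₁ G₂).Adj (Sum.inr p) (Sum.inr q) ↔ p.1 = q.1 ∧ G₂.Adj p.2 q.2 := Iff.rfl

theorem corona_neighborSet_inl (u : V₁) :
    (corona G₁ G₂).neighborSet (Sum.inl u) =
      Sum.inl '' G₁.neighborSet u ∪ Sum.inr '' Set.range (Prod.mk u) := by
  ext (v | p) <;> simp [eq_comm, Prod.ext_iff]

theorem corona_neighborSet_inr (p : V₁ × V₂) :
    (corona G₁ G₂).neighborSet (Sum.inr p) =
      {Sum.inl p.1} ∪ Sum.inr '' (Prod.mk p.1 '' G₂.neighborSet p.2) := by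
  ext (v | q) <;> simp [eq_comm, Prod.ext_iff]
  exact and_comm

variable [Fintype V₁] [Fintype V₂]

theorem ncard_neighborSet_corona_inl (u : V₁) :
    ((corona G₁ G₂).neighborSet (Sum.inl u)).ncard =
      (G₁.neighborSet u).ncard + Fintype.card V₂ := by
  rw [corona_neighborSet_inl, Set.ncard_union_eq (by simp),
    Set.ncard_image_of_injective _ Sum.inl_injective,
    Set.ncard_image_of_injective _ Sum.inr_injective,
    Set.ncard_range_of_injective (Prod.mk_right_injective u), Nat.card_eq_fintype_card]

theorem ncard_neighborSet_corona_inr (p : V₁ × V₂) :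
    ((corona G₁ G₂).neighborSet (Sum.inr p)).ncard = (G₂.neighborSet p.2).ncard + 1 := by
  rw [corona_neighborSet_inr, Set.ncard_union_eq (by simp),
    Set.ncard_image_of_injective _ Sum.inr_injective,
    Set.ncard_image_of_injective _ (Prod.mk_right_injective p.1), Set.ncard_singleton, add_comm]

theorem smul_one_sub_Aalpha_corona [DecidableEq V₁] [DecidableEq V₂] (α ν : ℝ) :
    ν • (1 : Matrix (V₁ ⊕ V₁ × V₂) (V₁ ⊕ V₁ × V₂) ℝ) - Aalpha (corona G₁ G₂) α =
      fromBlocks ((ν - α * Fintype.card V₂) • (1 : Matrix V₁ V₁ ℝ) - Aalpha G₁ α)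
        (of fun u p => if u = p.1 then -(1 - α) else 0)
        (of fun p u => if u = p.1 then -(1 - α) else 0)
        ((1 : Matrix V₁ V₁ ℝ) ⊗ₖ ((ν - α) • (1 : Matrix V₂ V₂ ℝ) - Aalpha G₂ α)) := by
  ext (u | p) (v | q) <;>
    simp [Aalpha, degMatrix, adjMat, one_apply, ncard_neighborSet_corona_inl,
      ncard_neighborSet_corona_inr, Prod.ext_iff] <;>
    split_ifs <;> simp_all <;> ring

end

theorem corona_Aalpha_charpoly_general {V₁ V₂ : Type*} [Fintype V₁] [Fintype V₂]
    [DecidableEq V₁] [DecidableEq V₂]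
    (G₁ : SimpleGraph V₁) (G₂ : SimpleGraph V₂)
    (α : ℝ) (β : ℝ) (hβ : β = 1 - α) (ν : ℝ)
    (hinv : det ((ν - α) • (1 : Matrix V₂ V₂ ℝ) - Aalpha G₂ α) ≠ 0) :
    det (ν • (1 : Matrix (V₁ ⊕ V₁ × V₂) (V₁ ⊕ V₁ × V₂) ℝ) - Aalpha (corona G₁ G₂) α)
      = (det ((ν - α) • (1 : Matrix V₂ V₂ ℝ) - Aalpha G₂ α)) ^ (Fintype.card V₁) *
        det ((ν - α * Fintype.card V₂ - β ^ 2 * coronal (Aalpha G₂ α) (ν - α)) •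
            (1 : Matrix V₁ V₁ ℝ) - Aalpha G₁ α) := by
  rw [smul_one_sub_Aalpha_corona,
    det_fromBlocks_one_kronecker _ _ _ _ (isUnit_iff_ne_zero.mpr hinv),
    coronal_eq_sum_inv, hβ, neg_mul_neg, ← sq]
  congr 2
  module

theorem corona_Aalpha_charpoly {V₁ V₂ : Type*} [Fintype V₁] [Fintype V₂]
    [DecidableEq V₁] [DecidableEq V₂]
    (G₁ : SimpleGraph V₁) (G₂ : SimpleGraph V₂)
    (α : ℝ) (h0 : 0 ≤ α) (h1 : α ≤ 1) (β : ℝ) (hβ : β = 1 - α) (ν : ℝ)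
    (hinv : det ((ν - α) • (1 : Matrix V₂ V₂ ℝ) - Aalpha G₂ α) ≠ 0) :
    det (ν • (1 : Matrix (V₁ ⊕ V₁ × V₂) (V₁ ⊕ V₁ × V₂) ℝ) - Aalpha (corona G₁ G₂) α)
      = (det ((ν - α) • (1 : Matrix V₂ V₂ ℝ) - Aalpha G₂ α)) ^ (Fintype.card V₁) *
        det ((ν - α * Fintype.card V₂ - β ^ 2 * coronal (Aalpha G₂ α) (ν - α)) •
            (1 : Matrix V₁ V₁ ℝ) - Aalpha G₁ α) :=
  corona_Aalpha_charpoly_general G₁ G₂ α β hβ ν hinv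
end

section
/- Let G₁ be a k₁-regular graph with n₁ vertices and m₁ edges, and G₂ an arbitrary graph on n₂ vertices; let 0 ≤ α < 1, β = 1−α, and set r(ν) = (n₂+2)α + β²Γ_{A_α(G₂)}(ν−α). Then, wherever (ν−α)I − A_α(G₂) is invertible and ν ≠ r(ν), f_{A_α(G₁⊖G₂)}(ν) = ∏_{j=1}^{n₂}(ν−α−ν_j(G₂))^{m₁} · (ν−r(ν))^{m₁} · det((ν − αk₁ + β(2α−1)k₁/(ν−r(ν)))I − (1 + β/(ν−r(ν)))A_α(G₁)). -/
open Matrix Polynomial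

noncomputable def incEquiv {V : Type*} [DecidableEq V] (G : SimpleGraph V) (u : V) :
    {e : G.edgeSet // u ∈ (e : Sym2 V)} ≃ G.neighborSet u :=
  (Equiv.subtypeSubtypeEquivSubtypeInter _ _).trans <|
    ((Equiv.setCongr (by ext e; simp [SimpleGraph.incidenceSet, and_comm] : {e : Sym2 V | e ∈ G.edgeSet ∧ u ∈ e} = G.incidenceSet u))).trans
      (G.incidenceSetEquivNeighborSet u)

lemma card_inc {V : Type*} [Fintype V] [DecidableEq V] (G : SimpleGraph V) [Fintype G.edgeSet]
    (u : V) : Nat.card {e : G.edgeSet // u ∈ (e : Sym2 V)} = (G.neighborSet u).ncard := by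
  rw [Nat.card_congr (incEquiv G u), Nat.card_coe_set_eq]

lemma incMul {V : Type*} [Fintype V] [DecidableEq V] (G : SimpleGraph V) [Fintype G.edgeSet]
    (k : ℕ) (hreg : ∀ v, (G.neighborSet v).ncard = k) :
    incMat G * (incMat G)ᵀ = (k : ℝ) • 1 + adjMat G := by
  classical
  ext u v
  have hsum : (incMat G * (incMat G)ᵀ) u v
      = ((Finset.univ.filter fun e : G.edgeSet =>
          u ∈ (e : Sym2 V) ∧ v ∈ (e : Sym2 V)).card : ℝ) := by
    rw [Matrix.mul_apply, ← Finset.sum_boole]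
    refine Finset.sum_congr rfl fun e _ => ?_
    simp only [incMat, transpose_apply, Matrix.of_apply]
    split_ifs <;> simp_all
  rw [hsum]
  rcases eq_or_ne u v with rfl | hne
  · have : (Finset.univ.filter fun e : G.edgeSet =>
        u ∈ (e : Sym2 V) ∧ u ∈ (e : Sym2 V)).card = k := by
      have := card_inc G u
      rw [hreg u] at this
      rw [← this, Nat.card_eq_fintype_card, Fintype.card_subtype]
      simp
    rw [this]
    simp [adjMat, Matrix.one_apply]
  · have hadj : adjMat G u v = if G.Adj u v then 1 else 0 := rfl
    by_cases h : G.Adj u v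
    · have : (Finset.univ.filter fun e : G.edgeSet =>
          u ∈ (e : Sym2 V) ∧ v ∈ (e : Sym2 V)) = {⟨s(u,v), G.mem_edgeSet.2 h⟩} := by
        ext e
        simp only [Finset.mem_filter, Finset.mem_univ, true_and, Finset.mem_singleton]
        rw [Sym2.mem_and_mem_iff hne, Subtype.ext_iff]
      rw [this]
      simp [adjMat, Matrix.one_apply, hne, h]
    · have : (Finset.univ.filter fun e : G.edgeSet =>
          u ∈ (e : Sym2 V) ∧ v ∈ (e : Sym2 V)) = ∅ := by
        ext e
        simp only [Finset.mem_filter, Finset.mem_univ, true_and, Finset.notMem_empty, iff_false]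
        intro hc
        rw [Sym2.mem_and_mem_iff hne] at hc
        exact h (G.mem_edgeSet.1 (hc ▸ e.2))
      rw [this]
      simp [adjMat, Matrix.one_apply, hne, h]

section Blocks
variable {V₁ V₂ : Type*} (G₁ : SimpleGraph V₁) (G₂ : SimpleGraph V₂)

lemma adj_ll (u v : V₁) : (RedgeCorona G₁ G₂).Adj (Sum.inl u) (Sum.inl v) ↔ G₁.Adj u v := Iff.rfl
lemma adj_lm (u : V₁) (e : G₁.edgeSet) :
    (RedgeCorona G₁ G₂).Adj (Sum.inl u) (Sum.inr (Sum.inl e)) ↔ u ∈ (e : Sym2 V₁) := Iff.rfl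
lemma adj_ml (u : V₁) (e : G₁.edgeSet) :
    (RedgeCorona G₁ G₂).Adj (Sum.inr (Sum.inl e)) (Sum.inl u) ↔ u ∈ (e : Sym2 V₁) := Iff.rfl
lemma adj_lr (u : V₁) (p : G₁.edgeSet × V₂) :
    (RedgeCorona G₁ G₂).Adj (Sum.inl u) (Sum.inr (Sum.inr p)) ↔ False := Iff.rfl
lemma adj_rl (u : V₁) (p : G₁.edgeSet × V₂) :
    (RedgeCorona G₁ G₂).Adj (Sum.inr (Sum.inr p)) (Sum.inl u) ↔ False := Iff.rfl
lemma adj_mm (e f : G₁.edgeSet) :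
    (RedgeCorona G₁ G₂).Adj (Sum.inr (Sum.inl e)) (Sum.inr (Sum.inl f)) ↔ False := Iff.rfl
lemma adj_mr (e : G₁.edgeSet) (p : G₁.edgeSet × V₂) :
    (RedgeCorona G₁ G₂).Adj (Sum.inr (Sum.inl e)) (Sum.inr (Sum.inr p)) ↔ e = p.1 := Iff.rfl
lemma adj_rm (e : G₁.edgeSet) (p : G₁.edgeSet × V₂) :
    (RedgeCorona G₁ G₂).Adj (Sum.inr (Sum.inr p)) (Sum.inr (Sum.inl e)) ↔ e = p.1 := Iff.rfl
lemma adj_rr (p q : G₁.edgeSet × V₂) :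
    (RedgeCorona G₁ G₂).Adj (Sum.inr (Sum.inr p)) (Sum.inr (Sum.inr q)) ↔
      p.1 = q.1 ∧ G₂.Adj p.2 q.2 := Iff.rfl

end Blocks

section Degrees
variable {V₁ V₂ : Type*} [Fintype V₁] [Fintype V₂] [DecidableEq V₁] [DecidableEq V₂]
  (G₁ : SimpleGraph V₁) (G₂ : SimpleGraph V₂) [Fintype G₁.edgeSet]

lemma deg_inl (k₁ : ℕ) (hreg : ∀ v, (G₁.neighborSet v).ncard = k₁) (u : V₁) :
    ((RedgeCorona G₁ G₂).neighborSet (Sum.inl u)).ncard = 2 * k₁ := by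
  classical
  have hset : (RedgeCorona G₁ G₂).neighborSet (Sum.inl u)
      = Sum.inl '' (G₁.neighborSet u)
        ∪ (Sum.inr ∘ Sum.inl) '' {e : G₁.edgeSet | u ∈ (e : Sym2 V₁)} := by
    ext x
    rcases x with v | (e | p) <;>
      simp [RedgeCorona, SimpleGraph.neighborSet, Set.mem_image]
  rw [hset, Set.ncard_union_eq ?_ (Set.toFinite _) (Set.toFinite _)]
  · rw [Set.ncard_image_of_injective _ Sum.inl_injective,
      Set.ncard_image_of_injective _ (Sum.inr_injective.comp Sum.inl_injective),
      hreg u]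
    have : ({e : G₁.edgeSet | u ∈ (e : Sym2 V₁)}).ncard = k₁ := by
      rw [← Nat.card_coe_set_eq]
      have := card_inc G₁ u
      rw [hreg u] at this
      rw [← this]
      exact Nat.card_congr (Equiv.setCongr rfl)
    rw [this]; ring
  · rw [Set.disjoint_left]
    rintro x ⟨v, _, rfl⟩ ⟨e, _, h⟩
    simp at h

lemma deg_mid (e : G₁.edgeSet) :
    ((RedgeCorona G₁ G₂).neighborSet (Sum.inr (Sum.inl e))).ncard = Fintype.card V₂ + 2 := by
  classical
  have hset : (RedgeCorona G₁ G₂).neighborSet (Sum.inr (Sum.inl e))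
      = Sum.inl '' {u : V₁ | u ∈ (e : Sym2 V₁)}
        ∪ (Sum.inr ∘ Sum.inr) '' ((fun w => (e, w)) '' (Set.univ : Set V₂)) := by
    ext x
    rcases x with v | (f | q)
    · simp only [SimpleGraph.mem_neighborSet, adj_ml, Set.mem_union, Set.mem_image,
        Set.mem_setOf_eq, Function.comp_apply]
      constructor
      · intro h; exact Or.inl ⟨v, h, rfl⟩
      · rintro (⟨u, hu, h⟩ | ⟨w, ⟨w', -, rfl⟩, h⟩)
        · rw [Sum.inl.injEq] at h; exact h ▸ hu
        · simp at h
    · simp only [SimpleGraph.mem_neighborSet, adj_mm, Set.mem_union, Set.mem_image,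
        Set.mem_setOf_eq, Function.comp_apply, false_iff]
      rintro (⟨u, hu, h⟩ | ⟨w, ⟨w', -, rfl⟩, h⟩) <;> simp at h
    · simp only [SimpleGraph.mem_neighborSet, adj_mr, Set.mem_union, Set.mem_image,
        Set.mem_setOf_eq, Function.comp_apply]
      constructor
      · intro h
        exact Or.inr ⟨q, ⟨q.2, Set.mem_univ _, by rw [h]⟩, rfl⟩
      · rintro (⟨u, hu, h⟩ | ⟨w, ⟨w', -, rfl⟩, h⟩)
        · simp at h
        · rw [Sum.inr.injEq, Sum.inr.injEq] at h
          rw [← h]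
    
  rw [hset, Set.ncard_union_eq ?_ (Set.toFinite _) (Set.toFinite _)]
  · rw [Set.ncard_image_of_injective _ Sum.inl_injective,
      Set.ncard_image_of_injective _ (Sum.inr_injective.comp Sum.inr_injective),
      Set.ncard_image_of_injective _ (fun a b h => (Prod.mk.injEq _ _ _ _ ▸ h).2),
      Set.ncard_univ, Nat.card_eq_fintype_card]
    have h2 : ({u : V₁ | u ∈ (e : Sym2 V₁)}).ncard = 2 := by
      obtain ⟨e, he⟩ := e
      induction e with
      | _ a b =>
        have hab : a ≠ b := fun h => (G₁.irrefl (h ▸ G₁.mem_edgeSet.1 he))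
        have : {u : V₁ | u ∈ (s(a, b) : Sym2 V₁)} = {a, b} := by
          ext u; simp [Sym2.mem_iff]
        rw [this, Set.ncard_pair hab]
    rw [h2]; ring
  · rw [Set.disjoint_left]
    rintro x ⟨v, _, rfl⟩ ⟨w, _, h⟩
    simp at h

lemma deg_copy (p : G₁.edgeSet × V₂) :
    ((RedgeCorona G₁ G₂).neighborSet (Sum.inr (Sum.inr p))).ncard
      = (G₂.neighborSet p.2).ncard + 1 := by
  classical
  have hset : (RedgeCorona G₁ G₂).neighborSet (Sum.inr (Sum.inr p))
      = {Sum.inr (Sum.inl p.1)}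
        ∪ (Sum.inr ∘ Sum.inr) '' ((fun w => (p.1, w)) '' G₂.neighborSet p.2) := by
    ext x
    rcases x with v | (f | q)
    · simp only [SimpleGraph.mem_neighborSet, adj_rl, Set.mem_union, Set.mem_image,
        Set.mem_singleton_iff, Function.comp_apply, false_iff]
      rintro (h | ⟨w, ⟨w', -, rfl⟩, h⟩) <;> simp at h
    · simp only [SimpleGraph.mem_neighborSet, adj_rm, Set.mem_union, Set.mem_image,
        Set.mem_singleton_iff, Function.comp_apply]
      constructor
      · intro h
        exact Or.inl (by rw [h])
      · rintro (h | ⟨w, ⟨w', -, rfl⟩, h⟩)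
        · rw [Sum.inr.injEq, Sum.inl.injEq] at h; rw [h]
        · simp at h
    · simp only [SimpleGraph.mem_neighborSet, adj_rr, Set.mem_union, Set.mem_image,
        Set.mem_singleton_iff, Function.comp_apply]
      constructor
      · rintro ⟨h1, h2⟩
        exact Or.inr ⟨q, ⟨q.2, h2, Prod.ext h1 rfl⟩, rfl⟩
      · rintro (h | ⟨w, ⟨w', hw, rfl⟩, h⟩)
        · simp at h
        · rw [Sum.inr.injEq, Sum.inr.injEq] at h
          rw [← h]; exact ⟨rfl, hw⟩
  rw [hset, Set.ncard_union_eq ?_ (Set.toFinite _) (Set.toFinite _)]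
  · rw [Set.ncard_singleton,
      Set.ncard_image_of_injective _ (Sum.inr_injective.comp Sum.inr_injective),
      Set.ncard_image_of_injective _ (fun a b h => (Prod.mk.injEq _ _ _ _ ▸ h).2)]
    ring
  · rw [Set.disjoint_left]
    rintro x rfl ⟨w, _, h⟩
    simp at h

end Degrees


open Kronecker in
lemma bigBlocks {V₁ V₂ : Type*} [Fintype V₁] [Fintype V₂] [DecidableEq V₁] [DecidableEq V₂]
    (G₁ : SimpleGraph V₁) (G₂ : SimpleGraph V₂) [Fintype G₁.edgeSet]
    (k₁ : ℕ) (hreg : ∀ v, (G₁.neighborSet v).ncard = k₁) (α ν : ℝ) :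
    ν • (1 : Matrix (V₁ ⊕ (G₁.edgeSet ⊕ G₁.edgeSet × V₂))
          (V₁ ⊕ (G₁.edgeSet ⊕ G₁.edgeSet × V₂)) ℝ)
      - Aalpha (RedgeCorona G₁ G₂) α
    = Matrix.fromBlocks
        ((ν - α * (2 * k₁)) • 1 - (1 - α) • adjMat G₁)
        (Matrix.fromCols ((-(1 - α)) • incMat G₁) 0)
        (Matrix.fromRows ((-(1 - α)) • (incMat G₁)ᵀ) 0)
        (Matrix.fromBlocks
          ((ν - α * (Fintype.card V₂ + 2)) • 1)
          ((-(1 - α)) • Matrix.of fun (e : G₁.edgeSet) (p : G₁.edgeSet × V₂) =>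
            if e = p.1 then (1:ℝ) else 0)
          ((-(1 - α)) • Matrix.of fun (p : G₁.edgeSet × V₂) (e : G₁.edgeSet) =>
            if e = p.1 then (1:ℝ) else 0)
          ((1 : Matrix G₁.edgeSet G₁.edgeSet ℝ) ⊗ₖ ((ν - α) • 1 - Aalpha G₂ α))) := by
  classical
  ext x y
  rcases x with u | (e | p) <;> rcases y with v | (f | q) <;>
    simp only [Aalpha, degMatrix, adjMat, incMat, Matrix.fromBlocks_apply₁₁,
      Matrix.fromBlocks_apply₁₂, Matrix.fromBlocks_apply₂₁, Matrix.fromBlocks_apply₂₂,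
      Matrix.fromCols_apply_inl, Matrix.fromCols_apply_inr, Matrix.fromRows_apply_inl,
      Matrix.fromRows_apply_inr, Matrix.one_apply, Matrix.sub_apply, Matrix.add_apply,
      Matrix.smul_apply, Matrix.of_apply, Matrix.kroneckerMap_apply, Matrix.transpose_apply,
      Matrix.zero_apply, deg_inl G₁ G₂ k₁ hreg, deg_mid G₁ G₂, deg_copy G₁ G₂,
      adj_ll, adj_lm, adj_ml, adj_lr, adj_rl, adj_mm, adj_mr, adj_rm, adj_rr,
      Sum.inl.injEq, Sum.inr.injEq, Prod.mk.injEq, smul_eq_mul, if_false, if_true,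
      reduceCtorEq]
  · -- inl inl
    rcases eq_or_ne u v with rfl | huv
    · simp [G₁.irrefl]
    · simp [huv]
  · -- inl, mid
    split_ifs <;> ring
  · -- inl, copy
    simp
  · -- mid, inl
    split_ifs <;> ring
  · -- mid mid
    rcases eq_or_ne e f with rfl | hef
    · simp
    · simp [hef]
  · -- mid copy
    rcases eq_or_ne e q.1 with rfl | hq
    · simp
    · simp [hq]
  · -- copy inl
    simp
  · -- copy mid
    rcases eq_or_ne f p.1 with rfl | hq
    · simp
    · simp [hq]
  · -- copy copy
    rcases eq_or_ne p q with rfl | hpq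
    · simp [G₂.irrefl]
      ring
    · rcases eq_or_ne p.1 q.1 with h1 | h1
      · rcases eq_or_ne p.2 q.2 with h2 | h2
        · exact absurd (Prod.ext h1 h2) hpq
        · simp [hpq, h1, h2]
      · simp [hpq, h1]

open Kronecker

theorem RedgeCorona_Aalpha_charpoly {V₁ V₂ : Type*} [Fintype V₁] [Fintype V₂]
    [DecidableEq V₁] [DecidableEq V₂]
    (G₁ : SimpleGraph V₁) (G₂ : SimpleGraph V₂) [Fintype G₁.edgeSet]
    (k₁ : ℕ) (hreg : ∀ v, (G₁.neighborSet v).ncard = k₁)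
    (α : ℝ) (h0 : 0 ≤ α) (h1 : α < 1) (β : ℝ) (hβ : β = 1 - α) (ν : ℝ)
    (r : ℝ) (hr : r = (Fintype.card V₂ + 2) * α + β ^ 2 * coronal (Aalpha G₂ α) (ν - α))
    (hinv : det ((ν - α) • (1 : Matrix V₂ V₂ ℝ) - Aalpha G₂ α) ≠ 0) (hνr : ν ≠ r) :
    det (ν • (1 : Matrix (V₁ ⊕ (G₁.edgeSet ⊕ G₁.edgeSet × V₂))
            (V₁ ⊕ (G₁.edgeSet ⊕ G₁.edgeSet × V₂)) ℝ)
        - Aalpha (RedgeCorona G₁ G₂) α)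
      = (det ((ν - α) • (1 : Matrix V₂ V₂ ℝ) - Aalpha G₂ α)) ^ (Fintype.card G₁.edgeSet) *
        (ν - r) ^ (Fintype.card G₁.edgeSet) *
        det ((ν - α * k₁ + β * (2 * α - 1) * k₁ / (ν - r)) • (1 : Matrix V₁ V₁ ℝ)
            - (1 + β / (ν - r)) • Aalpha G₁ α) := by
  classical
  subst hβ
  have hs : ν - r ≠ 0 := sub_ne_zero.2 hνr
  haveI iS : Invertible ((ν - α) • (1 : Matrix V₂ V₂ ℝ) - Aalpha G₂ α) :=
    Matrix.invertibleOfIsUnitDet _ (isUnit_iff_ne_zero.2 hinv)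
  rw [bigBlocks G₁ G₂ k₁ hreg α ν]
  set S₂ := (ν - α) • (1 : Matrix V₂ V₂ ℝ) - Aalpha G₂ α with hS₂
  set A₀ := (ν - α * (2 * k₁)) • (1 : Matrix V₁ V₁ ℝ) - (1 - α) • adjMat G₁ with hA₀
  set Bt := (-(1 - α)) • incMat G₁ with hBt
  set J₁ := (Matrix.of fun (e : G₁.edgeSet) (p : G₁.edgeSet × V₂) =>
    if e = p.1 then (1:ℝ) else 0) with hJ₁
  set J₂ := (Matrix.of fun (p : G₁.edgeSet × V₂) (e : G₁.edgeSet) =>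
    if e = p.1 then (1:ℝ) else 0) with hJ₂
  set P := (ν - α * (Fintype.card V₂ + 2)) • (1 : Matrix G₁.edgeSet G₁.edgeSet ℝ) with hP
  set Q := (-(1 - α)) • J₁ with hQ
  set Q' := (-(1 - α)) • J₂ with hQ'
  set R := (1 : Matrix G₁.edgeSet G₁.edgeSet ℝ) ⊗ₖ S₂ with hR
  haveI iR : Invertible R := by
    refine ⟨(1 : Matrix G₁.edgeSet G₁.edgeSet ℝ) ⊗ₖ (⅟S₂), ?_, ?_⟩ <;>
      rw [hR, ← Matrix.mul_kronecker_mul, Matrix.one_mul]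
    · rw [invOf_mul_self, Matrix.one_kronecker_one]
    · rw [mul_invOf_self, Matrix.one_kronecker_one]
  have hRinv : ⅟R = (1 : Matrix G₁.edgeSet G₁.edgeSet ℝ) ⊗ₖ (⅟S₂) :=
    invOf_eq_right_inv (by
      rw [hR, ← Matrix.mul_kronecker_mul, Matrix.one_mul, mul_invOf_self,
        Matrix.one_kronecker_one])
  have hS2inv : (⅟S₂ : Matrix V₂ V₂ ℝ) = S₂⁻¹ := invOf_eq_nonsing_inv S₂
  have hQRQ : Q * ⅟R * Q'
      = ((1 - α) ^ 2 * coronal (Aalpha G₂ α) (ν - α)) • (1 : Matrix G₁.edgeSet G₁.edgeSet ℝ) := by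
    ext e f
    have h1 : ∀ p : G₁.edgeSet × V₂,
        (Q * ⅟R) e p = if e = p.1 then -((1 - α) * ∑ w, ⅟S₂ w p.2) else 0 := by
      intro p
      rw [Matrix.mul_apply, Fintype.sum_prod_type, Finset.sum_comm]
      simp only [hQ, hJ₁, hRinv, Matrix.smul_apply, Matrix.of_apply,
        Matrix.kroneckerMap_apply, Matrix.one_apply, smul_eq_mul, ite_mul, zero_mul,
        one_mul, mul_ite, mul_zero, mul_one, neg_mul, neg_zero,
        Finset.sum_ite_eq, Finset.mem_univ, if_true]
      rcases eq_or_ne e p.1 with h | h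
      · simp [h, Finset.mul_sum]
      · simp [h]
    rw [Matrix.mul_apply]
    simp only [h1]
    rw [Fintype.sum_prod_type, Finset.sum_comm]
    simp only [hQ', hJ₂, Matrix.smul_apply, Matrix.of_apply, smul_eq_mul, ite_mul, zero_mul,
      mul_ite, mul_zero, mul_one, neg_mul, mul_neg, neg_neg, neg_zero,
      Finset.sum_ite_eq, Finset.mem_univ, if_true]
    have hco : coronal (Aalpha G₂ α) (ν - α) = ∑ i : V₂, ∑ j : V₂, S₂⁻¹ i j := by
      rw [coronal, hS₂]
      congr!
    rw [hco]
    simp only [hS2inv, Matrix.smul_apply, Matrix.one_apply, smul_eq_mul]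
    rcases eq_or_ne e f with rfl | hef
    · simp only [if_true, neg_neg, mul_one]
      simp only [Finset.mul_sum, Finset.sum_mul]
      rw [Finset.sum_comm]
      refine Finset.sum_congr rfl fun i _ => Finset.sum_congr rfl fun j _ => by ring
    · simp [hef]
  have hSch : P - Q * ⅟R * Q' = (ν - r) • 1 := by
    rw [hQRQ, hP, ← sub_smul]
    congr 1
    rw [hr]
    push_cast
    ring
  haveI iSm : Invertible ((ν - r) • (1 : Matrix G₁.edgeSet G₁.edgeSet ℝ)) :=
    ⟨(ν - r)⁻¹ • 1,
      by rw [Matrix.smul_mul, Matrix.one_mul, smul_smul, inv_mul_cancel₀ hs, one_smul],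
      by rw [Matrix.smul_mul, Matrix.one_mul, smul_smul, mul_inv_cancel₀ hs, one_smul]⟩
  haveI iSch : Invertible (P - Q * ⅟R * Q') := hSch ▸ iSm
  haveI iD : Invertible (Matrix.fromBlocks P Q Q' R) :=
    Matrix.fromBlocks₂₂Invertible P Q Q' R
  rw [Matrix.det_fromBlocks₂₂, Matrix.det_fromBlocks₂₂, hSch]
  have hdetR : R.det = S₂.det ^ Fintype.card G₁.edgeSet := by
    rw [hR, Matrix.det_kronecker, Matrix.det_one, one_pow, one_mul]
  have hdetSm : ((ν - r) • (1 : Matrix G₁.edgeSet G₁.edgeSet ℝ)).det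
      = (ν - r) ^ Fintype.card G₁.edgeSet := by
    rw [Matrix.det_smul, Matrix.det_one, mul_one]
  rw [hdetR, hdetSm]
  have hW : ⅟(P - Q * ⅟R * Q') = (ν - r)⁻¹ • (1 : Matrix G₁.edgeSet G₁.edgeSet ℝ) :=
    invOf_eq_right_inv (by
      rw [hSch, Matrix.smul_mul, Matrix.one_mul, smul_smul, mul_inv_cancel₀ hs, one_smul])
  have hBDC : Matrix.fromCols Bt (0 : Matrix V₁ (G₁.edgeSet × V₂) ℝ) * ⅟(Matrix.fromBlocks P Q Q' R)
        * Matrix.fromRows ((-(1 - α)) • (incMat G₁)ᵀ) (0 : Matrix (G₁.edgeSet × V₂) V₁ ℝ)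
      = ((1 - α) ^ 2 * (ν - r)⁻¹) • ((k₁ : ℝ) • 1 + adjMat G₁) := by
    rw [Matrix.invOf_fromBlocks₂₂_eq, Matrix.fromCols_mul_fromBlocks,
      Matrix.fromCols_mul_fromRows, hW]
    simp only [Matrix.zero_mul, Matrix.mul_zero, add_zero, Matrix.mul_smul, Matrix.smul_mul,
      Matrix.mul_one]
    rw [hBt]
    rw [← incMul G₁ k₁ hreg]
    simp only [Matrix.smul_mul, Matrix.mul_smul, Matrix.transpose_smul, smul_smul]
    ring_nf
  rw [hBDC]
  congr 2
  have hAal : Aalpha G₁ α = (α * k₁) • (1 : Matrix V₁ V₁ ℝ) + (1 - α) • adjMat G₁ := by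
    unfold Aalpha
    congr 1
    ext u v
    simp only [degMatrix, Matrix.smul_apply, Matrix.of_apply, Matrix.one_apply, smul_eq_mul]
    split_ifs with h
    · rw [hreg]; ring
    · ring
  rw [hAal, hA₀]
  match_scalars <;> field_simp <;> ring
end
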